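/- Fix 0 < θ < π and let F_θ be the closed-form function built from Appell F₁ as above. Then F_θ(z) → 0 as z → −1 with z in the open unit disk, z ≠ −1. -/

import Mathlib

/-!
`F_θ(z)` is `(z+1)^{1-θ/π}` times a factor that stays bounded as `z → -1`: the bases of `φ`, `ψ`
and of the two powers in `δ` are positive reals at `z = -1`, so these are continuous there with
`ψ(-1) ≠ 0`, while `ξ(z), η(z) → 0` and the Euler integral shows that `F₁` is bounded for small
arguments. Since `1 - θ/π > 0`, the first factor tends to `0`.
-/

open Complex

/-- A complex number avoids the closed negative real axis (so the principal
branch power with base `w` behaves well). -/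
def OffNegAxis (w : ℂ) : Prop := 0 < w.re ∨ w.im ≠ 0

/-- The Appell hypergeometric function `F₁(a,b,b′,c;x,y)` defined by the Euler
integral, with principal branch complex powers. -/
noncomputable def appellF1 (a b b' c : ℝ) (x y : ℂ) : ℂ :=
  ((Real.Gamma c / (Real.Gamma a * Real.Gamma (c - a)) : ℝ) : ℂ) *
    ∫ s in (0 : ℝ)..1,
      (s : ℂ) ^ ((a : ℂ) - 1) * ((1 : ℂ) - (s : ℂ)) ^ ((c : ℂ) - (a : ℂ) - 1) *
        (1 - (s : ℂ) * x) ^ (-(b : ℂ)) * (1 - (s : ℂ) * y) ^ (-(b' : ℂ))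

/-- `ξ(z) = (√π − i√θ)(z+1)/(2√π)`. -/
noncomputable def xiF (θ : ℝ) (z : ℂ) : ℂ :=
  (((Real.sqrt Real.pi : ℝ) : ℂ) - I * ((Real.sqrt θ : ℝ) : ℂ)) * (z + 1) /
    (2 * ((Real.sqrt Real.pi : ℝ) : ℂ))

/-- `η(z) = (√π + i√θ)(z+1)/(2√π)`. -/
noncomputable def etaF (θ : ℝ) (z : ℂ) : ℂ :=
  (((Real.sqrt Real.pi : ℝ) : ℂ) + I * ((Real.sqrt θ : ℝ) : ℂ)) * (z + 1) /
    (2 * ((Real.sqrt Real.pi : ℝ) : ℂ))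

/-- The common base `(π(z−1)² + θ(z+1)²)/(π+θ)` of `φ` and `ψ`. -/
noncomputable def baseF (θ : ℝ) (z : ℂ) : ℂ :=
  (((Real.pi : ℝ) : ℂ) * (z - 1) ^ 2 + ((θ : ℝ) : ℂ) * (z + 1) ^ 2) / (((Real.pi + θ : ℝ)) : ℂ)

/-- `φ(z) = [(π(z−1)² + θ(z+1)²)/(π+θ)]^{(π+θ)/(2π)}` (principal branch). -/
noncomputable def phiF (θ : ℝ) (z : ℂ) : ℂ :=
  baseF θ z ^ ((((Real.pi + θ) / (2 * Real.pi) : ℝ)) : ℂ)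

/-- `ψ(z) = [(π(z−1)² + θ(z+1)²)/(π+θ)]^{(π−θ)/(2π)}` (principal branch). -/
noncomputable def psiF (θ : ℝ) (z : ℂ) : ℂ :=
  baseF θ z ^ ((((Real.pi - θ) / (2 * Real.pi) : ℝ)) : ℂ)

/-- `δ(z) = [−√π(z−1) − i√θ(z+1)]^{(π−θ)/(2π)} [−√π(z−1) + i√θ(z+1)]^{(π−θ)/(2π)}`. -/
noncomputable def deltaF (θ : ℝ) (z : ℂ) : ℂ :=
  (-((Real.sqrt Real.pi : ℝ) : ℂ) * (z - 1) - I * ((Real.sqrt θ : ℝ) : ℂ) * (z + 1)) ^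
      ((((Real.pi - θ) / (2 * Real.pi) : ℝ)) : ℂ) *
    (-((Real.sqrt Real.pi : ℝ) : ℂ) * (z - 1) + I * ((Real.sqrt θ : ℝ) : ℂ) * (z + 1)) ^
      ((((Real.pi - θ) / (2 * Real.pi) : ℝ)) : ℂ)

/-- The closed-form Appell-`F₁` antiderivative `F_θ` of the Schwarz–Christoffel
integrand for the exterior map of the isosceles triangle `T_θ`. -/
noncomputable def FTheta (θ : ℝ) (z : ℂ) : ℂ :=
  (z + 1) ^ (((1 - θ / Real.pi : ℝ)) : ℂ) *
    (-phiF θ z / z +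
      ((2 : ℂ) ^ (((θ / Real.pi : ℝ)) : ℂ) *
          (((Real.pi : ℝ)) : ℂ) ^ ((((Real.pi + θ) / (2 * Real.pi) : ℝ)) : ℂ) /
          (((2 * Real.pi ^ 2 + Real.pi * θ - θ ^ 2 : ℝ)) : ℂ)) *
        (deltaF θ z / psiF θ z) *
        (-2 * (((2 * Real.pi - θ : ℝ)) : ℂ) *
            appellF1 (1 - θ / Real.pi) ((Real.pi - θ) / (2 * Real.pi))
              ((Real.pi - θ) / (2 * Real.pi)) (2 - θ / Real.pi) (xiF θ z) (etaF θ z) +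
          (((Real.pi + θ : ℝ)) : ℂ) * (z + 1) *
            appellF1 (2 - θ / Real.pi) ((Real.pi - θ) / (2 * Real.pi))
              ((Real.pi - θ) / (2 * Real.pi)) (3 - θ / Real.pi) (etaF θ z) (xiF θ z)))

open Filter Topology Asymptotics

theorem tendsto_cpow_const_nhds_zero {a : ℂ} (ha : 0 < a.re) :
    Tendsto (fun w : ℂ => w ^ a) (𝓝 0) (𝓝 0) := by
  simpa [zero_cpow (ne_of_apply_ne re ha.ne')] using
    (continuousAt_cpow_const_of_re_pos (z := 0) (Or.inl le_rfl) ha).tendsto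

theorem norm_cpow_neg_le_two_rpow {w : ℂ} (hw : 1 / 2 ≤ ‖w‖) {b : ℝ} (hb : 0 ≤ b) :
    ‖w ^ (-(b : ℂ))‖ ≤ 2 ^ b := by
  rw [← ofReal_neg, norm_cpow_real]
  calc ‖w‖ ^ (-b) ≤ (1 / 2 : ℝ) ^ (-b) :=
        Real.rpow_le_rpow_of_nonpos (by norm_num) hw (neg_nonpos.2 hb)
    _ = 2 ^ b := by rw [one_div, Real.inv_rpow zero_le_two, Real.rpow_neg zero_le_two, inv_inv]

theorem half_le_norm_one_sub_ofReal_mul {s : ℝ} (hs : s ∈ Set.Icc (0 : ℝ) 1) {x : ℂ}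
    (hx : ‖x‖ ≤ 1 / 2) : 1 / 2 ≤ ‖1 - (s : ℂ) * x‖ := by
  have hsx : ‖(s : ℂ) * x‖ ≤ 1 / 2 := by
    rw [norm_mul, norm_real, Real.norm_of_nonneg hs.1]
    exact (mul_le_of_le_one_left (norm_nonneg x) hs.2).trans hx
  have := norm_sub_norm_le (1 : ℂ) ((s : ℂ) * x)
  rw [norm_one] at this
  linarith

theorem exists_norm_appellF1_le {a b b' c : ℝ} (ha : 0 < a) (hac : a < c) (hb : 0 ≤ b)
    (hb' : 0 ≤ b') :
    ∃ K, ∀ x y : ℂ, ‖x‖ ≤ 1 / 2 → ‖y‖ ≤ 1 / 2 → ‖appellF1 a b b' c x y‖ ≤ K := by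
  set β : ℝ → ℂ := fun s =>
    (s : ℂ) ^ ((a : ℂ) - 1) * ((1 : ℂ) - (s : ℂ)) ^ ((c : ℂ) - (a : ℂ) - 1)
  have hβ : IntervalIntegrable β MeasureTheory.volume 0 1 := by
    have := betaIntegral_convergent (u := a) (v := ((c - a : ℝ) : ℂ))
      (by simpa using ha) (by simpa using hac)
    simpa [β, sub_sub] using this
  refine ⟨‖((Real.Gamma c / (Real.Gamma a * Real.Gamma (c - a)) : ℝ) : ℂ)‖ *
    ((∫ s in (0 : ℝ)..1, ‖β s‖) * (2 ^ b * 2 ^ b')), fun x y hx hy => ?_⟩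
  rw [appellF1, norm_mul, ← intervalIntegral.integral_mul_const]
  gcongr
  refine intervalIntegral.norm_integral_le_of_norm_le zero_le_one
    (MeasureTheory.ae_of_all _ fun s hs => ?_) (hβ.norm.mul_const _)
  have hs' : s ∈ Set.Icc (0 : ℝ) 1 := Set.Ioc_subset_Icc_self hs
  rw [norm_mul, norm_mul, mul_assoc]
  gcongr
  · exact norm_cpow_neg_le_two_rpow (half_le_norm_one_sub_ofReal_mul hs' hx) hb
  · exact norm_cpow_neg_le_two_rpow (half_le_norm_one_sub_ofReal_mul hs' hy) hb'

theorem appellF1_boundedAtFilter {α : Type*} {l : Filter α} {x y : α → ℂ}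
    {a b b' c : ℝ} (ha : 0 < a) (hac : a < c) (hb : 0 ≤ b) (hb' : 0 ≤ b')
    (hx : Tendsto x l (𝓝 0)) (hy : Tendsto y l (𝓝 0)) :
    BoundedAtFilter l (fun t => appellF1 a b b' c (x t) (y t)) := by
  obtain ⟨K, hK⟩ := exists_norm_appellF1_le ha hac hb hb'
  have hsmall {u : α → ℂ} (hu : Tendsto u l (𝓝 0)) : ∀ᶠ t in l, ‖u t‖ ≤ 1 / 2 := by
    filter_upwards [hu.eventually (Metric.closedBall_mem_nhds 0 one_half_pos)] with t ht
    exact mem_closedBall_zero_iff.1 ht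
  refine (isBigO_one_iff ℝ).2 (isBoundedUnder_of_eventually_le (a := K) ?_)
  filter_upwards [hsmall hx, hsmall hy] with t htx hty using hK _ _ htx hty

theorem baseF_neg_one (θ : ℝ) :
    baseF θ (-1) = ((4 * Real.pi / (Real.pi + θ) : ℝ) : ℂ) := by
  simp only [baseF]
  push_cast
  ring

theorem baseF_neg_one_mem_slitPlane {θ : ℝ} (hθ : -Real.pi < θ) :
    baseF θ (-1) ∈ slitPlane := by
  rw [baseF_neg_one]
  exact ofReal_mem_slitPlane.2 (div_pos (by positivity) (by linarith))

theorem continuousAt_baseF_cpow {θ : ℝ} (hθ : -Real.pi < θ) (p : ℂ) :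
    ContinuousAt (fun z => baseF θ z ^ p) (-1) :=
  (continuousAt_cpow_const (baseF_neg_one_mem_slitPlane hθ)).comp
    (by unfold baseF; fun_prop)

theorem psiF_neg_one_ne_zero {θ : ℝ} (hθ : -Real.pi < θ) : psiF θ (-1) ≠ 0 := by
  rw [psiF, Ne, cpow_eq_zero_iff, not_and_or]
  exact Or.inl (slitPlane_ne_zero (baseF_neg_one_mem_slitPlane hθ))

theorem continuousAt_deltaF (θ : ℝ) : ContinuousAt (deltaF θ) (-1) := by
  have hslit : ((2 * Real.sqrt Real.pi : ℝ) : ℂ) ∈ slitPlane :=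
    ofReal_mem_slitPlane.2 (by positivity)
  unfold deltaF
  refine ContinuousAt.mul ((continuousAt_cpow_const ?_).comp (by fun_prop))
    ((continuousAt_cpow_const ?_).comp (by fun_prop))
  all_goals convert hslit using 1; push_cast; ring

theorem tendsto_xiF (θ : ℝ) : Tendsto (xiF θ) (𝓝 (-1)) (𝓝 0) := by
  have : ContinuousAt (xiF θ) (-1) := by unfold xiF; fun_prop
  simpa [xiF] using this.tendsto

theorem tendsto_etaF (θ : ℝ) : Tendsto (etaF θ) (𝓝 (-1)) (𝓝 0) := by
  have : ContinuousAt (etaF θ) (-1) := by unfold etaF; fun_prop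
  simpa [etaF] using this.tendsto

/-- for `0 < θ < π`, the closed-form function `F_θ` tends to `0`
as `z → −1` with `z` in the open unit disk, `z ≠ −1`. -/
theorem stmt_10 (θ : ℝ) (hθ : θ ∈ Set.Ioo 0 Real.pi) :
    Filter.Tendsto (FTheta θ)
      (nhdsWithin (-1) (Metric.ball (0 : ℂ) 1 \ {-1})) (nhds 0) := by
  obtain ⟨hθ0, hθπ⟩ := hθ
  have hπ := Real.pi_pos
  set l := nhdsWithin (-1 : ℂ) (Metric.ball (0 : ℂ) 1 \ {-1})
  have hl : l ≤ 𝓝 (-1) := nhdsWithin_le_nhds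
  have hθ' : -Real.pi < θ := by linarith
  have hexp : 0 < 1 - θ / Real.pi := by rw [sub_pos, div_lt_one hπ]; exact hθπ
  have hb : 0 ≤ (Real.pi - θ) / (2 * Real.pi) := div_nonneg (by linarith) (by positivity)
  have hz : Tendsto (fun z : ℂ => z + 1) l (𝓝 0) := by
    simpa using ((continuous_add_const (1 : ℂ)).tendsto (-1)).mono_left hl
  have hvanish : ZeroAtFilter l (fun z : ℂ => (z + 1) ^ ((1 - θ / Real.pi : ℝ) : ℂ)) :=
    (tendsto_cpow_const_nhds_zero (by simpa using hexp)).comp hz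
  have hφ : BoundedAtFilter l (fun z => -phiF θ z / z) :=
    ((((continuousAt_baseF_cpow hθ' _).neg.div continuousAt_id (by norm_num)).tendsto).mono_left
      hl).isBigO_one ℝ
  have hδψ : BoundedAtFilter l (fun z => deltaF θ z / psiF θ z) :=
    ((((continuousAt_deltaF θ).div (continuousAt_baseF_cpow hθ' _)
      (psiF_neg_one_ne_zero hθ')).tendsto).mono_left hl).isBigO_one ℝ
  have hxi := (tendsto_xiF θ).mono_left hl
  have heta := (tendsto_etaF θ).mono_left hl
  have hF₁ := appellF1_boundedAtFilter (c := 2 - θ / Real.pi) hexp (by linarith) hb hb hxi heta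
  have hF₁' := appellF1_boundedAtFilter (a := 2 - θ / Real.pi) (c := 3 - θ / Real.pi)
    (by linarith) (by linarith) hb hb heta hxi
  -- `FTheta θ` unfolds definitionally to this product of a vanishing and a bounded factor
  exact hvanish.mul_boundedAtFilter (hφ.add (((const_boundedAtFilter l _).mul hδψ).mul
    (((const_boundedAtFilter l _).mul hF₁).add
      (((const_boundedAtFilter l _).mul (hz.isBigO_one ℝ)).mul hF₁'))))
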